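/- For every natural number n, the sum over k from 0 to n of C(n,k)^2·H(k)·H(n-k) equals C(2n,n)·(H2(n) - H2(2n) + (2·H(n) - H(2n))^2), where H(m) is the m-th harmonic number and H2(m) = Σ_{j=1}^m 1/j^2. -/

import Mathlib

noncomputable def H (m : ℕ) : ℚ := ∑ j ∈ Finset.range m, (1 : ℚ) / (j + 1)

noncomputable def H2 (m : ℕ) : ℚ := ∑ j ∈ Finset.range m, (1 : ℚ) / ((j : ℚ) + 1) ^ 2

/-!
Let `dₖ = descPochhammer ℚ k`, so `dₖ(m) = m (m - 1) ⋯ (m - k + 1)`. The Chu–Vandermonde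
identity `dₙ(x + y) = ∑_{i+j=n} C(n,i) dᵢ(x) dⱼ(y)` is a polynomial identity, so it can be
differentiated. At `x = y = n` we have `C(n,i) dᵢ(n) dⱼ(n) = n! C(n,i)²`, the logarithmic
derivative of `dᵢ` is `H n - H j`, and at `2n` the first two derivatives of `dₙ` are expressed
through `H (2n) - H n` and `H2 (2n) - H2 n`. So the first derivative and the mixed second
derivative of the identity give `∑ C(n,i)² ((H n - H j) + (H n - H i))` and
`∑ C(n,i)² (H n - H j) (H n - H i)`; writing `H i H j = (H n - (H n - H i)) (H n - (H n - H j))`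
reduces the theorem to these two sums and `∑ C(n,i)² = C(2n,n)`.
-/

open Polynomial Finset

lemma Polynomial.descPochhammer_comp_add {R : Type*} [CommRing R] (n : ℕ) (p q : R[X]) :
    (descPochhammer R n).comp (p + q) = ∑ ij ∈ antidiagonal n, (n.choose ij.1 : R[X]) *
      ((descPochhammer R ij.1).comp p * (descPochhammer R ij.2).comp q) := by
  have hcomp (k : ℕ) (r : R[X]) :
      (descPochhammer ℤ k).smeval r = (descPochhammer R k).comp r := by
    rw [← descPochhammer_map (Int.castRingHom R), comp, eval₂_map, ← aeval_eq_smeval]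
    rfl
  simpa only [hcomp] using Ring.descPochhammer_smeval_add n (Commute.all p q)

lemma Polynomial.eval_derivative_descPochhammer_add_self {R : Type*} [CommRing R] (n : ℕ)
    (a : R) :
    2 * (derivative (descPochhammer R n)).eval (a + a) = ∑ ij ∈ antidiagonal n,
      (n.choose ij.1 : R) *
        ((derivative (descPochhammer R ij.1)).eval a * (descPochhammer R ij.2).eval a +
          (descPochhammer R ij.1).eval a * (derivative (descPochhammer R ij.2)).eval a) := by
  have h := congrArg (fun p => (derivative p).eval a) (descPochhammer_comp_add n X X)
  simp only [derivative_comp, derivative_add, derivative_X, derivative_mul, derivative_natCast,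
    map_sum, eval_finsetSum, eval_add, eval_mul, eval_comp, eval_X, eval_natCast, eval_one,
    comp_X, zero_mul, zero_add] at h
  linear_combination h

/-- Polarization: the second derivatives of `dₙ(X + X)`, `dₙ(X + a)` and `dₙ(a + X)` combine
to the mixed second derivative of `dₙ(x + y)`. -/
lemma Polynomial.eval_derivative_derivative_descPochhammer_add_self {K : Type*} [Field K]
    [CharZero K] (n : ℕ) (a : K) :
    (derivative (derivative (descPochhammer K n))).eval (a + a) = ∑ ij ∈ antidiagonal n,
      (n.choose ij.1 : K) * ((derivative (descPochhammer K ij.1)).eval a *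
        (derivative (descPochhammer K ij.2)).eval a) := by
  have h (p q : K[X]) :=
    congrArg (fun r => (derivative (derivative r)).eval a) (descPochhammer_comp_add n p q)
  have hdiag := h X X
  have hl := h X (C a)
  have hr := h (C a) X
  simp only [derivative_comp, derivative_add, derivative_X, derivative_C, derivative_one,
    derivative_mul, derivative_natCast, map_sum, eval_finsetSum, eval_add, eval_mul, eval_comp,
    eval_X, eval_C, eval_natCast, eval_one, comp_X, one_mul, zero_mul, mul_zero, add_zero,
    zero_add] at hdiag hl hr
  simp only [mul_add, sum_add_distrib] at hdiag
  linear_combination (hdiag - hl - hr) / 2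

lemma Nat.choose_mul_descFactorial_mul_descFactorial {i j n : ℕ} (h : i + j = n) :
    n.choose i * n.descFactorial i * n.descFactorial j = n.factorial * n.choose i ^ 2 := by
  subst h
  rw [Nat.descFactorial_eq_factorial_mul_choose, Nat.descFactorial_eq_factorial_mul_choose,
    Nat.choose_symm_add, ← Nat.add_choose_mul_factorial_mul_factorial]
  ring

lemma H_succ (m : ℕ) : H (m + 1) = H m + 1 / (m + 1) := by
  simp [H, sum_range_succ]

lemma H2_succ (m : ℕ) : H2 (m + 1) = H2 m + 1 / ((m : ℚ) + 1) ^ 2 := by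
  simp [H2, sum_range_succ]

lemma eval_derivative_descPochhammer_natCast {j k m : ℕ} (h : j + k = m) :
    (derivative (descPochhammer ℚ k)).eval (m : ℚ) = m.descFactorial k * (H m - H j) := by
  subst h
  induction k generalizing j with
  | zero => simp
  | succ k ih =>
    have hj : (j + 1 : ℚ) ≠ 0 := by positivity
    rw [show j + (k + 1) = j + 1 + k by ring, descPochhammer_succ_right, derivative_mul,
      Nat.descFactorial_succ]
    simp only [eval_add, eval_mul, eval_sub, eval_X, eval_natCast, derivative_sub, derivative_X,
      derivative_natCast, sub_zero, mul_one, ih, descPochhammer_eval_eq_descFactorial, H_succ]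
    push_cast [show j + 1 + k - k = j + 1 by omega]
    field_simp
    ring

lemma eval_derivative_derivative_descPochhammer_natCast {j k m : ℕ} (h : j + k = m) :
    (derivative (derivative (descPochhammer ℚ k))).eval (m : ℚ) =
      m.descFactorial k * ((H m - H j) ^ 2 - (H2 m - H2 j)) := by
  subst h
  induction k generalizing j with
  | zero => simp
  | succ k ih =>
    have hj : (j + 1 : ℚ) ≠ 0 := by positivity
    rw [show j + (k + 1) = j + 1 + k by ring, descPochhammer_succ_right, derivative_mul,
      derivative_add, derivative_mul, derivative_mul, Nat.descFactorial_succ]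
    simp only [eval_add, eval_mul, eval_sub, eval_X, eval_natCast, derivative_sub, derivative_X,
      derivative_natCast, derivative_one, sub_zero, mul_one, mul_zero, add_zero, ih,
      eval_derivative_descPochhammer_natCast rfl, H_succ, H2_succ]
    push_cast [show j + 1 + k - k = j + 1 by omega]
    field_simp
    ring

lemma sum_antidiagonal_choose_sq (n : ℕ) :
    ∑ ij ∈ antidiagonal n, (n.choose ij.1 : ℚ) ^ 2 = (2 * n).choose n := by
  rw [Nat.sum_antidiagonal_eq_sum_range_succ_mk]
  exact_mod_cast Nat.sum_range_choose_sq n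

lemma sum_antidiagonal_choose_sq_mul_H_sub_add (n : ℕ) :
    ∑ ij ∈ antidiagonal n, (n.choose ij.1 : ℚ) ^ 2 * ((H n - H ij.2) + (H n - H ij.1)) =
      2 * (2 * n).choose n * (H (2 * n) - H n) := by
  have h := eval_derivative_descPochhammer_add_self (R := ℚ) n n
  rw [← Nat.cast_add, ← two_mul, eval_derivative_descPochhammer_natCast (two_mul n).symm,
    Nat.descFactorial_eq_factorial_mul_choose, Nat.cast_mul] at h
  refine mul_left_cancel₀ (Nat.cast_ne_zero.2 n.factorial_ne_zero : (n.factorial : ℚ) ≠ 0) ?_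
  rw [mul_sum, show (n.factorial : ℚ) * (2 * (2 * n).choose n * (H (2 * n) - H n)) =
    2 * (n.factorial * (2 * n).choose n * (H (2 * n) - H n)) by ring, h]
  refine sum_congr rfl fun ⟨i, j⟩ hij => ?_
  rw [HasAntidiagonal.mem_antidiagonal] at hij
  dsimp only at hij ⊢
  have hw : (n.choose i : ℚ) * n.descFactorial i * n.descFactorial j =
      n.factorial * n.choose i ^ 2 := by
    exact_mod_cast Nat.choose_mul_descFactorial_mul_descFactorial hij
  rw [eval_derivative_descPochhammer_natCast (show j + i = n by omega),
    eval_derivative_descPochhammer_natCast (show i + j = n by omega),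
    descPochhammer_eval_eq_descFactorial, descPochhammer_eval_eq_descFactorial]
  linear_combination (H j - H n + (H i - H n)) * hw

lemma sum_antidiagonal_choose_sq_mul_H_sub_mul (n : ℕ) :
    ∑ ij ∈ antidiagonal n, (n.choose ij.1 : ℚ) ^ 2 * ((H n - H ij.2) * (H n - H ij.1)) =
      (2 * n).choose n * ((H (2 * n) - H n) ^ 2 - (H2 (2 * n) - H2 n)) := by
  have h := eval_derivative_derivative_descPochhammer_add_self (K := ℚ) n n
  rw [← Nat.cast_add, ← two_mul,
    eval_derivative_derivative_descPochhammer_natCast (two_mul n).symm,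
    Nat.descFactorial_eq_factorial_mul_choose, Nat.cast_mul] at h
  refine mul_left_cancel₀ (Nat.cast_ne_zero.2 n.factorial_ne_zero : (n.factorial : ℚ) ≠ 0) ?_
  rw [mul_sum, ← mul_assoc, h]
  refine sum_congr rfl fun ⟨i, j⟩ hij => ?_
  rw [HasAntidiagonal.mem_antidiagonal] at hij
  dsimp only at hij ⊢
  have hw : (n.choose i : ℚ) * n.descFactorial i * n.descFactorial j =
      n.factorial * n.choose i ^ 2 := by
    exact_mod_cast Nat.choose_mul_descFactorial_mul_descFactorial hij
  rw [eval_derivative_descPochhammer_natCast (show j + i = n by omega),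
    eval_derivative_descPochhammer_natCast (show i + j = n by omega)]
  linear_combination (-(H n - H j) * (H n - H i)) * hw

theorem stmt_9 (n : ℕ) :
    ∑ k ∈ Finset.range (n + 1), (n.choose k : ℚ) ^ 2 * H k * H (n - k) =
    ((2 * n).choose n : ℚ) * (H2 n - H2 (2 * n) + (2 * H n - H (2 * n)) ^ 2) := by
  rw [← Nat.sum_antidiagonal_eq_sum_range_succ (fun i j => (n.choose i : ℚ) ^ 2 * H i * H j)]
  have hterm : ∀ ij ∈ antidiagonal n, (n.choose ij.1 : ℚ) ^ 2 * H ij.1 * H ij.2 =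
      H n ^ 2 * (n.choose ij.1 : ℚ) ^ 2
        - H n * ((n.choose ij.1 : ℚ) ^ 2 * ((H n - H ij.2) + (H n - H ij.1)))
        + (n.choose ij.1 : ℚ) ^ 2 * ((H n - H ij.2) * (H n - H ij.1)) :=
    fun _ _ => by ring
  rw [sum_congr rfl hterm, sum_add_distrib, sum_sub_distrib, ← mul_sum, ← mul_sum,
    sum_antidiagonal_choose_sq, sum_antidiagonal_choose_sq_mul_H_sub_add,
    sum_antidiagonal_choose_sq_mul_H_sub_mul]
  ring
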